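/- arXiv:2010.03685 — 4 statements merged into one kernel-verified Lean document; each statement's English description precedes it below -/
import Mathlib

section
/- Let φ : ℂ × ℂ → GL_n(ℂ) satisfy φ(μ+λ, z) = φ(μ, e^λ z)φ(λ, z) and φ(0,z) = I, let M(z) = φ(2πi, z), and suppose the unipotent part M_u(z) of M(z) defines a function M_u : ℂ → GL_n(ℂ) (automatically satisfying M_u(e^λ z) = φ(λ,z) M_u(z) φ(λ,z)^{-1}). Then σ(λ, z) := exp( −(λ / 2πi) · log M_u(e^λ z) ) satisfies the groupoid 1-cocycle identity σ(μ, e^λ z) · φ(μ, e^λ z) · σ(λ, z) · φ(μ, e^λ z)^{-1} = σ(μ + λ, z) for all μ, λ, z ∈ ℂ. -/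
open Matrix

abbrev Mat (n : ℕ) := Matrix (Fin n) (Fin n) ℂ

/-- `S` is diagonalizable over `ℂ`. -/
def IsDiagonalizable {n : ℕ} (S : Mat n) : Prop :=
  ∃ (P : Mat n) (d : Fin n → ℂ), IsUnit P ∧ S = P * Matrix.diagonal d * P⁻¹

/-- The (finite) logarithm series of a unipotent matrix. -/
noncomputable def unipLog {n : ℕ} (U : Mat n) : Mat n :=
  ∑ k ∈ Finset.Icc 1 n, ((-1 : ℂ) ^ (k + 1) / (k : ℂ)) • (U - 1) ^ k

/-- The untwisting cocycle `σ(λ, z) = exp(−(λ/2πi) log M_u(e^λ z))`. -/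
noncomputable def untwist {n : ℕ} (Mu : ℂ → Mat n) (l z : ℂ) : Mat n :=
  NormedSpace.exp
    ((-(l / (2 * Real.pi * Complex.I))) • unipLog (Mu (Complex.exp l * z)))

/-!
Equivariance `M_u(e^μ w) = φ(μ, w) M_u(w) φ(μ, w)⁻¹` and the fact that `log` and `exp` commute
with conjugation turn `φ(μ, e^λ z) σ(λ, z) φ(μ, e^λ z)⁻¹` into `exp(−(λ/2πi) L)` with
`L = log M_u(e^{μ+λ} z)`. Since `σ(μ, e^λ z) = exp(−(μ/2πi) L)` as well, the two exponentials
are of commuting multiples of `L` and multiply to `exp(−((μ+λ)/2πi) L) = σ(μ + λ, z)`.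
The cocycle identity with `φ(0, ·) = 1` makes every `φ(λ, z)` invertible, with inverse
`φ(−λ, e^λ z)`.
-/

lemma unipLog_conj {n : ℕ} {P : Mat n} (hP : IsUnit P) (U : Mat n) :
    unipLog (P * U * P⁻¹) = P * unipLog U * P⁻¹ := by
  obtain ⟨u, rfl⟩ := hP
  rw [← Matrix.coe_units_inv]
  have hsub : (↑u : Mat n) * U * ↑u⁻¹ - 1 = ↑u * (U - 1) * ↑u⁻¹ := by
    rw [mul_sub, sub_mul, mul_one, Units.mul_inv]
  simp only [unipLog, hsub, Units.conj_pow, Finset.mul_sum, Finset.sum_mul, mul_smul_comm,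
    smul_mul_assoc]

lemma exp_smul_unipLog_conj {n : ℕ} {P : Mat n} (hP : IsUnit P) (a : ℂ) (U : Mat n) :
    NormedSpace.exp (a • unipLog (P * U * P⁻¹)) = P * NormedSpace.exp (a • unipLog U) * P⁻¹ := by
  rw [unipLog_conj hP, ← Matrix.exp_conj _ _ hP, mul_smul_comm, smul_mul_assoc]

lemma exp_smul_mul_exp_smul {n : ℕ} (a b : ℂ) (X : Mat n) :
    NormedSpace.exp (a • X) * NormedSpace.exp (b • X) = NormedSpace.exp ((a + b) • X) := by
  rw [add_smul, Matrix.exp_add_of_commute]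
  exact ((Commute.refl X).smul_left a).smul_right b

lemma isUnit_of_cocycle {n : ℕ} {φ : ℂ → ℂ → Mat n}
    (hcoc : ∀ μ l z : ℂ, φ (μ + l) z = φ μ (Complex.exp l * z) * φ l z)
    (hid : ∀ z : ℂ, φ 0 z = 1) (l z : ℂ) : IsUnit (φ l z) := by
  have hinv : φ (-l) (Complex.exp l * z) * φ l z = 1 := by
    rw [← hcoc, neg_add_cancel, hid]
  exact (Matrix.isUnit_iff_isUnit_det _).mpr (Matrix.isUnit_det_of_left_inverse hinv)

theorem untwisting_cocycle_general {n : ℕ} (φ : ℂ → ℂ → Mat n) (Mu : ℂ → Mat n)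
    (hcoc : ∀ μ l z : ℂ, φ (μ + l) z = φ μ (Complex.exp l * z) * φ l z)
    (hid : ∀ z : ℂ, φ 0 z = 1)
    (hequiv : ∀ l z : ℂ, Mu (Complex.exp l * z) = φ l z * Mu z * (φ l z)⁻¹) :
    ∀ μ l z : ℂ,
      untwist Mu μ (Complex.exp l * z) * φ μ (Complex.exp l * z) * untwist Mu l z *
          (φ μ (Complex.exp l * z))⁻¹ =
        untwist Mu (μ + l) z := by
  intro μ l z
  set c : ℂ := 2 * Real.pi * Complex.I
  set P := φ μ (Complex.exp l * z)
  have hw : Complex.exp μ * (Complex.exp l * z) = Complex.exp (μ + l) * z := by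
    rw [Complex.exp_add, mul_assoc]
  have hL : unipLog (Mu (Complex.exp (μ + l) * z))
      = unipLog (P * Mu (Complex.exp l * z) * P⁻¹) := by
    rw [← hw, hequiv]
  have hconj : P * untwist Mu l z * P⁻¹
      = NormedSpace.exp ((-(l / c)) • unipLog (Mu (Complex.exp (μ + l) * z))) := by
    rw [hL, exp_smul_unipLog_conj (isUnit_of_cocycle hcoc hid _ _), untwist]
  calc untwist Mu μ (Complex.exp l * z) * P * untwist Mu l z * P⁻¹
      = untwist Mu μ (Complex.exp l * z) * (P * untwist Mu l z * P⁻¹) := by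
        simp only [mul_assoc]
    _ = NormedSpace.exp ((-(μ / c)) • unipLog (Mu (Complex.exp (μ + l) * z)))
          * NormedSpace.exp ((-(l / c)) • unipLog (Mu (Complex.exp (μ + l) * z))) := by
        rw [hconj, untwist, hw]
    _ = untwist Mu (μ + l) z := by
        rw [exp_smul_mul_exp_smul, untwist]
        congr 2
        simp only [c]
        ring

/-- The untwisting cocycle built from the unipotent part of the monodromy of a
representation of `ℂ ⋉ 𝔸` satisfies the groupoid 1-cocycle identity. -/
theorem untwisting_cocycle {n : ℕ} (φ : ℂ → ℂ → Mat n) (Mu : ℂ → Mat n)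
    (hcoc : ∀ μ l z : ℂ, φ (μ + l) z = φ μ (Complex.exp l * z) * φ l z)
    (hid : ∀ z : ℂ, φ 0 z = 1)
    (hunip : ∀ z : ℂ, (Mu z - 1) ^ n = 0)
    (hJC : ∀ z : ℂ, ∃ Ms : Mat n, IsDiagonalizable Ms ∧ IsUnit Ms ∧
      Commute Ms (Mu z) ∧ φ (2 * Real.pi * Complex.I) z = Ms * Mu z)
    (hequiv : ∀ l z : ℂ, Mu (Complex.exp l * z) = φ l z * Mu z * (φ l z)⁻¹) :
    ∀ μ l z : ℂ,
      untwist Mu μ (Complex.exp l * z) * φ μ (Complex.exp l * z) * untwist Mu l z *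
          (φ μ (Complex.exp l * z))⁻¹ =
        untwist Mu (μ + l) z :=
  untwisting_cocycle_general φ Mu hcoc hid hequiv
end

section
/- Let S ∈ M_n(ℂ) and let N_0, N_1, …, N_m ∈ M_n(ℂ) be matrices with [S, N_i] = i·N_i for each i. Define A(z) = S + Σ_{i=0}^{m} z^i N_i and, on the slit plane ℂ minus the negative real axis, s(z) = exp(log(z)·S) · exp(log(z)·(Σ_{i=0}^m N_i)) using the principal logarithm. Then s is a fundamental solution of the Fuchsian equation z·s'(z) = A(z)·s(z) on the slit plane. -/
open Matrix

attribute [local instance]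
  Matrix.linftyOpNormedAddCommGroup Matrix.linftyOpNormedRing
  Matrix.linftyOpNormedSpace Matrix.linftyOpNormedAlgebra

/-! Since `[S, N_i] = i N_i`, conjugating `N_i` by `z^S = exp (log z • S)` multiplies it by `z^i`,
so `A(z) z^S = z^S (S + N')` with `N' = Σ N_i`. The product rule applied to `z^S z^{N'}`, whose
factors have logarithmic derivatives `S` and `N'`, then gives `z s'(z) = A(z) s(z)`. -/

open NormedSpace Complex

section ComplexBanachAlgebra

variable {𝔸 : Type*} [NormedRing 𝔸] [NormedAlgebra ℂ 𝔸] [CompleteSpace 𝔸]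

theorem exp_smul_mul_of_commutator_eq_smul {S B : 𝔸} {c : ℂ} (h : S * B - B * S = c • B)
    (t : ℂ) : exp (t • S) * B = Complex.exp (t * c) • (B * exp (t • S)) := by
  let _ : NormedAlgebra ℚ 𝔸 := NormedAlgebra.restrictScalars ℚ ℂ 𝔸
  have hSB : S * B = B * S + c • B := sub_eq_iff_eq_add'.mp h
  have hsemi : SemiconjBy B (t • S + algebraMap ℂ 𝔸 (t * c)) (t • S) := by
    rw [SemiconjBy, mul_add, ← Algebra.commutes, ← Algebra.smul_def, smul_mul_assoc, hSB,
      mul_smul_comm, smul_add, smul_smul]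
  have hcomm : Commute (t • S) (algebraMap ℂ 𝔸 (t * c)) := (Algebra.commutes _ _).symm
  rw [← hsemi.exp_right, exp_add_of_commute hcomm, ← algebraMap_exp_comm, ← exp_eq_exp_ℂ,
    ← mul_assoc, ← Algebra.commutes, ← Algebra.smul_def]

theorem exp_log_smul_mul_of_commutator_eq_natCast_smul {S B : 𝔸} {k : ℕ}
    (h : S * B - B * S = (k : ℂ) • B) {z : ℂ} (hz : z ≠ 0) :
    exp (log z • S) * B = z ^ k • (B * exp (log z • S)) := by
  rw [exp_smul_mul_of_commutator_eq_smul h, mul_comm, Complex.exp_nat_mul, Complex.exp_log hz]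

theorem sum_pow_smul_mul_exp_log_smul {S : 𝔸} {N : ℕ → 𝔸} {s : Finset ℕ}
    (h : ∀ i ∈ s, S * N i - N i * S = (i : ℂ) • N i) {z : ℂ} (hz : z ≠ 0) :
    (∑ i ∈ s, z ^ i • N i) * exp (log z • S) = exp (log z • S) * ∑ i ∈ s, N i := by
  rw [Finset.sum_mul, Finset.mul_sum]
  refine Finset.sum_congr rfl fun i hi => ?_
  rw [exp_log_smul_mul_of_commutator_eq_natCast_smul (h i hi) hz, smul_mul_assoc]

theorem hasDerivAt_exp_log_smul (X : 𝔸) {z : ℂ} (hz : z ∈ slitPlane) :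
    HasDerivAt (fun w : ℂ => exp (log w • X)) (z⁻¹ • (X * exp (log z • X))) z :=
  (hasDerivAt_exp_smul_const' X (log z)).scomp z (hasDerivAt_log hz)

end ComplexBanachAlgebra

/-- A connection 1-form in Levelt normal form `A(z) = S + Σ_{i=0}^m z^i N_i`, with
`[S, N_i] = i N_i`, has the explicit fundamental solution
`s(z) = z^S z^{N'} = exp(log z · S) exp(log z · Σ N_i)` on the slit plane:
`z · s'(z) = A(z) · s(z)`. -/
theorem levelt_fundamental_solution {n m : ℕ} (S : Mat n) (N : ℕ → Mat n)
    (hres : ∀ i : ℕ, i ≤ m → S * N i - N i * S = (i : ℂ) • N i) :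
    ∀ z ∈ Complex.slitPlane,
      HasDerivAt
        (fun w : ℂ =>
          NormedSpace.exp (Complex.log w • S) *
            NormedSpace.exp (Complex.log w • ∑ i ∈ Finset.range (m + 1), N i))
        (z⁻¹ •
          ((S + ∑ i ∈ Finset.range (m + 1), z ^ i • N i) *
            (NormedSpace.exp (Complex.log z • S) *
              NormedSpace.exp (Complex.log z • ∑ i ∈ Finset.range (m + 1), N i))))
        z := by
  intro z hz
  have hconj : (∑ i ∈ Finset.range (m + 1), z ^ i • N i) * NormedSpace.exp (log z • S) =
      NormedSpace.exp (log z • S) * ∑ i ∈ Finset.range (m + 1), N i :=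
    sum_pow_smul_mul_exp_log_smul (fun i hi => hres i (Finset.mem_range_succ_iff.mp hi))
      (slitPlane_ne_zero hz)
  refine ((hasDerivAt_exp_log_smul S hz).mul (hasDerivAt_exp_log_smul _ hz)).congr_deriv ?_
  rw [add_mul, ← mul_assoc (∑ i ∈ _, z ^ i • N i), hconj, smul_add, smul_mul_assoc, mul_assoc,
    mul_smul_comm, mul_assoc]
  -- the two sides differ only in the instance path to matrix multiplication
  rfl
end

section
/- Let M : ℂ → GL_n(ℂ) be continuous and suppose that for every z ≠ 0 the matrix M(z) is conjugate to M(1). Then M(0) lies in the closure of the conjugacy class of M(1); in particular, the semisimple parts of M(0) and M(1) are conjugate, and if M(1) is semisimple (diagonalizable) then M(0) is conjugate to M(1). -/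
open Matrix

/-!
For `z ≠ 0` the matrix `M z` is conjugate to `M 1`, and `0` is a limit of nonzero points, so
`M 0` lies in the closure of the conjugacy class of `M 1`. Any continuous function that is constant
on conjugacy classes therefore takes the same value at `M 0` and `M 1`: this applies to the
evaluations of the characteristic polynomial and to `X ↦ p(X)` for a polynomial `p`.

Multiplying by a commuting unipotent does not change the characteristic polynomial, and
diagonalizable matrices with the same characteristic polynomial are conjugate; this gives the
statement about semisimple parts. If `M 1` is diagonalizable it is killed by a squarefree
polynomial, hence so is `M 0`, which is then diagonalizable with the characteristic polynomial
of `M 1`.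
-/

open Polynomial Module

section ConjugacyClosure

variable {R A : Type*} [CommSemiring R] [Semiring A] [Algebra R A]

theorem SemiconjBy.aeval {a b c : A} (h : SemiconjBy c a b) (p : R[X]) :
    SemiconjBy c (aeval a p) (aeval b p) := by
  induction p using Polynomial.induction_on' with
  | add p q hp hq => simpa only [map_add] using hp.add_right hq
  | monomial n r =>
    simpa only [aeval_monomial] using
      SemiconjBy.mul_right (Algebra.commute_algebraMap_right r c) (h.pow_right n)

theorem IsConj.aeval_eq_zero {a b : A} (h : IsConj a b) {p : R[X]} (hp : aeval a p = 0) :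
    aeval b p = 0 := by
  obtain ⟨c, hc⟩ := h
  have hcp := hc.aeval p
  rw [hp, SemiconjBy, mul_zero] at hcp
  exact (Units.mul_left_eq_zero c).mp hcp.symm

theorem eq_of_mem_closure_conjugatesOf {M X : Type*} [Monoid M] [TopologicalSpace M]
    [TopologicalSpace X] [T1Space X] {f : M → X} (hf : Continuous f) {a b : M}
    (hconj : ∀ b, IsConj a b → f b = f a) (hb : b ∈ closure (conjugatesOf a)) :
    f b = f a := by
  have hfb := map_mem_closure hf hb (t := {f a}) fun x hx => hconj x hx
  rwa [closure_singleton] at hfb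

theorem aeval_eq_zero_of_mem_closure_conjugatesOf [TopologicalSpace A] [IsTopologicalSemiring A]
    [T1Space A] {a b : A} {p : R[X]} (hp : aeval a p = 0) (hb : b ∈ closure (conjugatesOf a)) :
    aeval b p = 0 := by
  rw [← hp]
  exact eq_of_mem_closure_conjugatesOf p.continuous_aeval
    (fun c hc => by rw [hp, hc.aeval_eq_zero hp]) hb

end ConjugacyClosure

theorem Fintype.exists_equiv_comp_eq_of_map_univ_eq {ι κ α : Type*} [Fintype ι] [Fintype κ]
    [DecidableEq α] {f : ι → α} {g : κ → α}
    (h : Finset.univ.val.map f = Finset.univ.val.map g) : ∃ e : ι ≃ κ, g ∘ e = f := by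
  classical
  have hfib : ∀ a, Fintype.card {i // f i = a} = Fintype.card {j // g j = a} := fun a => by
    simpa [Fintype.card_subtype, Multiset.count_map, eq_comm, Finset.card_def] using
      congrArg (Multiset.count a) h
  exact ⟨Equiv.ofFiberEquiv fun a => Fintype.equivOfCardEq (hfib a),
    funext fun i => Equiv.ofFiberEquiv_map _ i⟩

namespace Matrix

variable {ι R K : Type*} [Fintype ι] [DecidableEq ι]

theorem isConj_iff_exists_isUnit [CommRing R] {A B : Matrix ι ι R} :
    IsConj A B ↔ ∃ g, IsUnit g ∧ B = g * A * g⁻¹ := by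
  constructor
  · rintro ⟨c, hc⟩
    refine ⟨c, c.isUnit, ?_⟩
    rw [← coe_units_inv, Units.eq_mul_inv_iff_mul_eq]
    exact hc.symm
  · rintro ⟨g, ⟨c, rfl⟩, h⟩
    refine ⟨c, ?_⟩
    rw [← coe_units_inv, Units.eq_mul_inv_iff_mul_eq] at h
    exact h.symm

theorem _root_.IsConj.charpoly_eq [CommRing R] {A B : Matrix ι ι R} (h : IsConj A B) :
    A.charpoly = B.charpoly := by
  obtain ⟨c, hc⟩ := h
  rw [← charpoly_units_conj c A, hc.eq, mul_assoc, ← coe_units_inv, Units.mul_inv, mul_one]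

theorem charpoly_eq_of_mem_closure_conjugatesOf [Field K] [Infinite K] [TopologicalSpace K]
    [IsTopologicalRing K] [T1Space K] {A B : Matrix ι ι K} (hB : B ∈ closure (conjugatesOf A)) :
    B.charpoly = A.charpoly := by
  refine Polynomial.funext fun t => ?_
  have hcont : Continuous fun X : Matrix ι ι K => X.charpoly.eval t := by
    simp only [eval_charpoly]
    exact (continuous_const.sub continuous_id).matrix_det
  exact eq_of_mem_closure_conjugatesOf hcont (fun X hX => by rw [hX.charpoly_eq]) hB

theorem det_one_add_of_isNilpotent [CommRing R] [IsDomain R] {N : Matrix ι ι R}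
    (hN : IsNilpotent N) : (1 + N).det = 1 := by
  have hcp : (-N).charpoly = X ^ Fintype.card ι :=
    sub_eq_zero.mp (isNilpotent_charpoly_sub_pow_of_isNilpotent hN.neg).eq_zero
  simpa [eval_charpoly] using congrArg (eval 1) hcp

theorem det_add_of_isNilpotent [CommRing R] [IsDomain R] {B N : Matrix ι ι R} (hB : IsUnit B)
    (hN : IsNilpotent N) (hBN : Commute B N) : (B + N).det = B.det := by
  obtain ⟨u, rfl⟩ := hB
  have hinv : Commute ↑u⁻¹ N := hBN.units_inv_left
  calc (↑u + N).det = (↑u * (1 + ↑u⁻¹ * N) : Matrix ι ι R).det := by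
        rw [mul_add, mul_one, ← mul_assoc, Units.mul_inv, one_mul]
    _ = (u : Matrix ι ι R).det := by
        rw [det_mul, det_one_add_of_isNilpotent (hinv.isNilpotent_mul_left hN), mul_one]

/-- Over the fraction field of `R[X]` the characteristic matrix becomes invertible, so
`det_add_of_isNilpotent` applies to it. -/
theorem charpoly_add_of_isNilpotent [CommRing R] [IsDomain R] {A N : Matrix ι ι R}
    (hN : IsNilpotent N) (hAN : Commute A N) : (A + N).charpoly = A.charpoly := by
  let φ : R[X] →+* FractionRing R[X] := algebraMap _ _
  have hφ : Function.Injective φ := IsFractionRing.injective _ _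
  have hB : IsUnit (φ.mapMatrix (charmatrix A)) := by
    rw [isUnit_iff_isUnit_det, ← RingHom.map_det, isUnit_iff_ne_zero]
    exact (map_ne_zero_iff φ hφ).mpr (charpoly_monic A).ne_zero
  have hcomm : Commute (charmatrix A) (-C.mapMatrix N) :=
    ((scalar_commute _ (fun _ => Commute.all _ _) _).sub_left (hAN.map _)).neg_right
  have hsplit : charmatrix (A + N) = charmatrix A + -C.mapMatrix N := by
    rw [charmatrix, charmatrix, map_add, ← sub_eq_add_neg, sub_sub]
  apply hφ
  rw [charpoly, charpoly, RingHom.map_det, RingHom.map_det, hsplit, map_add]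
  exact det_add_of_isNilpotent hB ((hN.map _).neg.map _) (hcomm.map _)

theorem charpoly_mul_of_isNilpotent_sub_one [CommRing R] [IsDomain R] {S U : Matrix ι ι R}
    (hU : IsNilpotent (U - 1)) (hSU : Commute S U) : (S * U).charpoly = S.charpoly := by
  have hSU' : Commute S (U - 1) := hSU.sub_right (Commute.one_right S)
  rw [← charpoly_add_of_isNilpotent (hSU'.isNilpotent_mul_left hU)
    ((Commute.refl S).mul_right hSU'), mul_sub, mul_one, add_sub_cancel]

theorem isConj_submatrix_equiv [CommRing R] (A : Matrix ι ι R) (σ : Equiv.Perm ι) :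
    IsConj A (A.submatrix σ σ) := by
  refine ⟨⟨σ.permMatrix R, σ⁻¹.permMatrix R, ?_, ?_⟩, ?_⟩
  · rw [← permMatrix_mul, inv_mul_cancel, permMatrix_one]
  · rw [← permMatrix_mul, mul_inv_cancel, permMatrix_one]
  · show σ.permMatrix R * A = A.submatrix σ σ * σ.permMatrix R
    simp [Equiv.Perm.permMatrix, PEquiv.toMatrix_toPEquiv_mul, PEquiv.mul_toMatrix_toPEquiv]

theorem isConj_diagonal_of_charpoly_eq [CommRing R] [IsDomain R] {d e : ι → R}
    (h : (diagonal d).charpoly = (diagonal e).charpoly) : IsConj (diagonal d) (diagonal e) := by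
  classical
  have hroots : ∀ d : ι → R, (diagonal d).charpoly.roots = Finset.univ.val.map d := fun d => by
    rw [charpoly_diagonal, Finset.prod_eq_multiset_prod,
      ← roots_multiset_prod_X_sub_C (Finset.univ.val.map d), Multiset.map_map]
    rfl
  obtain ⟨σ, hσ⟩ := Fintype.exists_equiv_comp_eq_of_map_univ_eq
    (by rw [← hroots, ← hroots, h] : Finset.univ.val.map e = Finset.univ.val.map d)
  have hconj := isConj_submatrix_equiv (diagonal d) σ
  rwa [submatrix_diagonal_equiv, hσ] at hconj

theorem isConj_diagonal_of_basis [Field K] {A : Matrix ι ι K} (b : Basis ι K (ι → K))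
    (d : ι → K) (hb : ∀ i, A *ᵥ b i = d i • b i) : IsConj (diagonal d) A := by
  let := (Pi.basisFun K ι).invertibleToMatrix b
  refine ⟨(isUnit_of_invertible ((Pi.basisFun K ι).toMatrix b)).unit, ?_⟩
  ext i j
  have hbij := congrFun (hb j) i
  simp only [mulVec, dotProduct, Pi.smul_apply, smul_eq_mul] at hbij
  rw [IsUnit.unit_spec, mul_diagonal, mul_apply]
  simp only [Basis.toMatrix_apply, Pi.basisFun_repr]
  rw [hbij, mul_comm]

theorem exists_isConj_diagonal_of_squarefree_aeval_eq_zero [Field K] [IsAlgClosed K]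
    {A : Matrix ι ι K} {p : K[X]} (hp : Squarefree p) (hA : aeval A p = 0) :
    ∃ d, IsConj (diagonal d) A := by
  classical
  set f : End K (ι → K) := toLinAlgEquiv' A
  have hf : f.IsSemisimple :=
    End.isSemisimple_of_squarefree_aeval_eq_zero hp (by rw [aeval_algHom_apply, hA, map_zero])
  have hint := DirectSum.isInternal_submodule_of_iSupIndep_of_iSup_eq_top
    f.eigenspaces_iSupIndep hf.iSup_eigenspace_eq_top
  let v := hint.collectedBasis fun μ => finBasis K (f.eigenspace μ)
  let e := v.indexEquiv (Pi.basisFun K ι)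
  refine ⟨fun i => (e.symm i).1, isConj_diagonal_of_basis (v.reindex e) _ fun i => ?_⟩
  rw [Basis.reindex_apply, ← toLin'_apply]
  exact End.mem_eigenspace_iff.mp (hint.collectedBasis_mem _ _)

theorem exists_squarefree_aeval_diagonal_eq_zero [Field K] (d : ι → K) :
    ∃ p : K[X], Squarefree p ∧ aeval (diagonal d) p = 0 := by
  classical
  refine ⟨∏ a ∈ Finset.univ.image d, (X - C a), ?_, ?_⟩
  · exact (separable_prod_X_sub_C_iff'.mpr fun _ _ _ _ h => h).squarefree
  · rw [← diagonalAlgHom_apply (R := K), aeval_algHom_apply, aeval_pi_apply,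
      diagonalAlgHom_apply, diagonal_eq_zero]
    funext i
    simp [Finset.prod_eq_zero_iff, sub_eq_zero]

end Matrix

section IsDiagonalizable

variable {n : ℕ} {A B : Mat n}

theorem isDiagonalizable_iff_exists_isConj :
    IsDiagonalizable A ↔ ∃ d, IsConj (diagonal d) A := by
  simp only [IsDiagonalizable, isConj_iff_exists_isUnit]
  exact exists_comm

theorem IsDiagonalizable.isConj_of_charpoly_eq (hA : IsDiagonalizable A) (hB : IsDiagonalizable B)
    (h : A.charpoly = B.charpoly) : IsConj A B := by
  obtain ⟨d, hd⟩ := isDiagonalizable_iff_exists_isConj.mp hA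
  obtain ⟨e, he⟩ := isDiagonalizable_iff_exists_isConj.mp hB
  have hde : IsConj (diagonal d) (diagonal e) :=
    isConj_diagonal_of_charpoly_eq (by rw [hd.charpoly_eq, he.charpoly_eq, h])
  exact hd.symm.trans (hde.trans he)

theorem IsDiagonalizable.exists_squarefree_aeval_eq_zero (hA : IsDiagonalizable A) :
    ∃ p : ℂ[X], Squarefree p ∧ aeval A p = 0 := by
  obtain ⟨d, hd⟩ := isDiagonalizable_iff_exists_isConj.mp hA
  obtain ⟨p, hp, hdp⟩ := exists_squarefree_aeval_diagonal_eq_zero d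
  exact ⟨p, hp, hd.aeval_eq_zero hdp⟩

theorem isDiagonalizable_of_squarefree_aeval_eq_zero {p : ℂ[X]} (hp : Squarefree p)
    (hA : aeval A p = 0) : IsDiagonalizable A :=
  isDiagonalizable_iff_exists_isConj.mpr (exists_isConj_diagonal_of_squarefree_aeval_eq_zero hp hA)

end IsDiagonalizable

/-- If `M : ℂ → GL_n(ℂ)` is continuous and `M(z)` is conjugate to `M(1)` for all
`z ≠ 0`, then `M(0)` lies in the closure of the conjugacy class of `M(1)`, the
semisimple parts of `M(0)` and `M(1)` are conjugate, and if `M(1)` is semisimple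
then `M(0)` is conjugate to `M(1)`. -/
theorem monodromy_at_zero_in_closure {n : ℕ} (M : ℂ → Mat n)
    (hcont : Continuous M)
    (hconj : ∀ z : ℂ, z ≠ 0 → ∃ g : Mat n, IsUnit g ∧ M z = g * M 1 * g⁻¹) :
    M 0 ∈ closure {X : Mat n | ∃ g : Mat n, IsUnit g ∧ X = g * M 1 * g⁻¹} ∧
    (∀ S₀ U₀ S₁ U₁ : Mat n,
      IsDiagonalizable S₀ → IsNilpotent (U₀ - 1) → Commute S₀ U₀ → M 0 = S₀ * U₀ →
      IsDiagonalizable S₁ → IsNilpotent (U₁ - 1) → Commute S₁ U₁ → M 1 = S₁ * U₁ →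
      ∃ g : Mat n, IsUnit g ∧ S₀ = g * S₁ * g⁻¹) ∧
    (IsDiagonalizable (M 1) →
      ∃ g : Mat n, IsUnit g ∧ M 0 = g * M 1 * g⁻¹) := by
  have hclass :
      {X : Mat n | ∃ g : Mat n, IsUnit g ∧ X = g * M 1 * g⁻¹} = conjugatesOf (M 1) :=
    Set.ext fun _ => isConj_iff_exists_isUnit.symm
  have hmem : M 0 ∈ closure (conjugatesOf (M 1)) :=
    map_mem_closure hcont (s := {0}ᶜ) (by rw [closure_compl_singleton]; exact Set.mem_univ 0)
      fun z hz => isConj_iff_exists_isUnit.mpr (hconj z hz)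
  have hcp := charpoly_eq_of_mem_closure_conjugatesOf hmem
  refine ⟨hclass ▸ hmem, ?_, fun h₁ => ?_⟩
  · intro S₀ U₀ S₁ U₁ hS₀ hU₀ hc₀ hM₀ hS₁ hU₁ hc₁ hM₁
    refine isConj_iff_exists_isUnit.mp (hS₁.isConj_of_charpoly_eq hS₀ ?_)
    rw [← charpoly_mul_of_isNilpotent_sub_one hU₀ hc₀,
      ← charpoly_mul_of_isNilpotent_sub_one hU₁ hc₁, ← hM₀, ← hM₁, hcp]
  · obtain ⟨p, hp, hp₁⟩ := h₁.exists_squarefree_aeval_eq_zero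
    have h₀ := isDiagonalizable_of_squarefree_aeval_eq_zero hp
      (aeval_eq_zero_of_mem_closure_conjugatesOf hp₁ hmem)
    exact isConj_iff_exists_isUnit.mp (h₁.isConj_of_charpoly_eq h₀ hcp.symm)
end

section
/- Let M : ℂ → GL_n(ℂ) be holomorphic and suppose all the matrices M(z) for z ≠ 0 are pairwise conjugate. Then the functions z ↦ M_s(z) and z ↦ M_u(z), assigning to z the semisimple and unipotent parts of M(z), are holomorphic on all of ℂ; indeed there is a single polynomial p ∈ ℂ[X] with p(0)=0 such that M_s(z) = p(M(z)) for every z ∈ ℂ, including z = 0. -/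
/-!
By Jordan–Chevalley, the semisimple part of `M 1` is `p (M 1)` for a polynomial `p`, and this is
certified by two polynomial identities in `M 1`: `q (p (M 1)) = 0` with `q` squarefree, and
`(M 1 - p (M 1)) ^ k = 0`. Polynomial identities are invariant under conjugation, so they hold at
every `z ≠ 0`, and they are closed conditions, so they also hold at `z = 0`. Hence `p (M z)` is the
semisimple part of `M z` for every `z`, and it depends holomorphically on `z`.
-/

open Matrix Polynomial

attribute [local instance]
  Matrix.linftyOpNormedAddCommGroup Matrix.linftyOpNormedRing
  Matrix.linftyOpNormedSpace Matrix.linftyOpNormedAlgebra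

theorem Polynomial.aeval_units_conj {R A : Type*} [CommSemiring R] [Ring A] [Algebra R A]
    (u : Aˣ) (x : A) (r : R[X]) : aeval ((u : A) * x * ↑u⁻¹) r = u * aeval x r * ↑u⁻¹ := by
  have := aeval_algEquiv (MulSemiringAction.toAlgEquiv R A (ConjAct.toConjAct u)) x
  simpa [ConjAct.units_smul_def] using congr($this r)

theorem isUnit_of_isNilpotent_sub {R : Type*} [Ring R] {a b : R} (ha : IsUnit a)
    (hab : Commute b a) (hnil : IsNilpotent (a - b)) : IsUnit b := by
  simpa using hnil.neg.isUnit_add_left_of_commute ha ((Commute.refl a).sub_left hab).neg_left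

theorem Differentiable.aeval {𝕜 E A : Type*} [NontriviallyNormedField 𝕜]
    [NormedAddCommGroup E] [NormedSpace 𝕜 E] [NormedRing A] [NormedAlgebra 𝕜 A]
    {f : E → A} (hf : Differentiable 𝕜 f) (r : 𝕜[X]) :
    Differentiable 𝕜 fun x => aeval (f x) r := by
  simp only [aeval_eq_sum_range]
  fun_prop

namespace Matrix

variable {ι : Type*} [Fintype ι] [DecidableEq ι]

section CommRing

variable {R : Type*} [CommRing R]

theorem aeval_conj {g : Matrix ι ι R} (hg : IsUnit g) (A : Matrix ι ι R) (r : R[X]) :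
    aeval (g * A * g⁻¹) r = g * aeval A r * g⁻¹ := by
  obtain ⟨u, rfl⟩ := hg
  rw [← coe_units_inv, aeval_units_conj]

theorem aeval_eq_zero_of_forall_mem_dense_conj {X : Type*} [TopologicalSpace X]
    [TopologicalSpace R] [IsTopologicalRing R] [T2Space R] {M : X → Matrix ι ι R}
    (hM : Continuous M) {s : Set X} (hs : Dense s) {A : Matrix ι ι R}
    (hconj : ∀ z ∈ s, ∃ g, IsUnit g ∧ M z = g * A * g⁻¹) {r : R[X]} (hr : aeval A r = 0)
    (z : X) : aeval (M z) r = 0 := by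
  refine congr_fun (Continuous.ext_on hs (r.continuous_aeval.comp hM) continuous_const ?_) z
  intro z hz
  obtain ⟨g, hg, hMz⟩ := hconj z hz
  simp [hMz, aeval_conj hg, hr]

theorem isNilpotent_inv_mul_sub_one {a b : Matrix ι ι R} (hb : IsUnit b) (hab : Commute b a)
    (hnil : IsNilpotent (a - b)) : IsNilpotent (b⁻¹ * a - 1) := by
  obtain ⟨u, rfl⟩ := hb
  have hcomm : Commute (↑u⁻¹ : Matrix ι ι R) (a - u) :=
    (hab.sub_right (Commute.refl _)).units_inv_left
  rw [← coe_units_inv]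
  simpa [mul_sub] using hcomm.isNilpotent_mul_left hnil

/-- The constant coefficient of the characteristic polynomial is `± det A`, a unit, so a suitable
multiple of the characteristic polynomial can be subtracted. -/
theorem exists_coeff_zero_eq_zero_aeval_eq {A : Matrix ι ι R} (hA : IsUnit A) (r : R[X]) :
    ∃ p : R[X], p.coeff 0 = 0 ∧ aeval A p = aeval A r := by
  have hc : IsUnit (A.charpoly.coeff 0) := by
    have hdet := (isUnit_iff_isUnit_det A).mp hA
    rw [det_eq_sign_charpoly_coeff] at hdet
    exact isUnit_of_mul_isUnit_right hdet
  refine ⟨r - C (r.coeff 0 * ↑hc.unit⁻¹) * A.charpoly, ?_, ?_⟩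
  · simp [mul_assoc]
  · simp [aeval_self_charpoly]

end CommRing

variable {K : Type*} [Field K]

/-- Jordan–Chevalley as polynomial identities: `p A` is the semisimple part of `A`, since it is
killed by the squarefree `q` and `A - p A` is nilpotent. -/
theorem exists_jordanChevalley_polynomials [PerfectField K] (A : Matrix ι ι K) :
    ∃ (p q : K[X]) (k : ℕ),
      Squarefree q ∧ aeval A (q.comp p) = 0 ∧ aeval A ((X - p) ^ k) = 0 := by
  let e : Matrix ι ι K ≃ₐ[K] Module.End K (ι → K) := toLinAlgEquiv'
  obtain ⟨N, -, s, hs, ⟨k, hNk⟩, hss, hAs⟩ := (e A).exists_isNilpotent_isSemisimple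
  rw [Algebra.adjoin_singleton_eq_range_aeval] at hs
  obtain ⟨p, rfl⟩ := hs
  replace hAs : e A - aeval (e A) p = N := sub_eq_of_eq_add hAs
  refine ⟨p, minpoly K (aeval (e A) p), k, hss.minpoly_squarefree, ?_, ?_⟩
  all_goals
    apply e.injective
    rw [map_zero, ← AlgEquiv.coe_toAlgHom, ← aeval_algHom_apply, AlgEquiv.coe_toAlgHom]
  · rw [aeval_comp, minpoly.aeval]
  · rw [map_pow, map_sub, aeval_X, hAs, hNk]

theorem exists_jordanChevalley_polynomials_of_isUnit [PerfectField K] {A : Matrix ι ι K}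
    (hA : IsUnit A) : ∃ (p q : K[X]) (k : ℕ), p.coeff 0 = 0 ∧
      Squarefree q ∧ aeval A (q.comp p) = 0 ∧ aeval A ((X - p) ^ k) = 0 := by
  obtain ⟨p₀, q, k, hq, hqA, hnilA⟩ := A.exists_jordanChevalley_polynomials
  obtain ⟨p, hp0, hpp₀⟩ := exists_coeff_zero_eq_zero_aeval_eq hA p₀
  refine ⟨p, q, k, hp0, hq, ?_, ?_⟩
  · rwa [aeval_comp, hpp₀, ← aeval_comp]
  · simpa [hpp₀] using hnilA

theorem exists_eq_mul_diagonal_mul_inv_of_eigenbasis {B : Matrix ι ι K}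
    (b : Module.Basis ι K (ι → K)) (d : ι → K) (hb : ∀ i, B *ᵥ b i = d i • b i) :
    ∃ P : Matrix ι ι K, IsUnit P ∧ B = P * diagonal d * P⁻¹ := by
  let P : Matrix ι ι K := of fun i j => b j i
  have hP : IsUnit P := linearIndependent_cols_iff_isUnit.mp b.linearIndependent
  have hBP : B * P = P * diagonal d := by
    ext i j
    rw [mul_diagonal]
    simpa [mulVec, dotProduct, mul_apply, P, mul_comm] using congr_fun (hb j) i
  refine ⟨P, hP, ?_⟩
  rw [← hBP, mul_nonsing_inv_cancel_right _ _ ((isUnit_iff_isUnit_det P).mp hP)]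

theorem exists_eq_mul_diagonal_mul_inv_of_squarefree [IsAlgClosed K] {B : Matrix ι ι K}
    {q : K[X]} (hq : Squarefree q) (hB : aeval B q = 0) :
    ∃ (P : Matrix ι ι K) (d : ι → K), IsUnit P ∧ B = P * diagonal d * P⁻¹ := by
  classical
  let f : Module.End K (ι → K) := toLinAlgEquiv' B
  have hf : aeval f q = 0 := by simp [f, aeval_algEquiv, hB]
  have hdec : DirectSum.IsInternal f.eigenspace :=
    DirectSum.isInternal_submodule_of_iSupIndep_of_iSup_eq_top f.eigenspaces_iSupIndep
      (Module.End.isSemisimple_of_squarefree_aeval_eq_zero hq hf).iSup_eigenspace_eq_top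
  let v := hdec.collectedBasis fun μ => Module.finBasis K (f.eigenspace μ)
  have hv (j) : f (v j) = j.1 • v j :=
    Module.End.mem_eigenspace_iff.mp (hdec.collectedBasis_mem _ j)
  let σ := v.indexEquiv (Pi.basisFun K ι)
  obtain ⟨P, hP, hBP⟩ := exists_eq_mul_diagonal_mul_inv_of_eigenbasis (B := B) (v.reindex σ)
    (fun i => (σ.symm i).1) fun i => by simpa [f] using hv (σ.symm i)
  exact ⟨P, _, hP, hBP⟩

end Matrix

/-- If `M : ℂ → GL_n(ℂ)` is holomorphic and the matrices `M(z)`, `z ≠ 0`, are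
pairwise conjugate, then there is a single polynomial `p` with `p(0) = 0` such
that `M_s(z) = p(M(z))` is the semisimple part of `M(z)` for every `z` (including
`z = 0`); in particular `M_s` and `M_u = M_s⁻¹ M` are holomorphic on all of `ℂ`. -/
theorem semisimple_part_holomorphic {n : ℕ} (M : ℂ → Mat n)
    (hdiff : Differentiable ℂ M)
    (hunit : ∀ z : ℂ, IsUnit (M z))
    (hconj : ∀ z w : ℂ, z ≠ 0 → w ≠ 0 →
      ∃ g : Mat n, IsUnit g ∧ M z = g * M w * g⁻¹) :
    ∃ p : Polynomial ℂ, p.coeff 0 = 0 ∧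
      (∀ z : ℂ,
        IsDiagonalizable (aeval (M z) p) ∧ IsUnit (aeval (M z) p) ∧
        Commute (aeval (M z) p) (M z) ∧
        IsNilpotent ((aeval (M z) p)⁻¹ * M z - 1)) ∧
      Differentiable ℂ (fun z => aeval (M z) p) ∧
      Differentiable ℂ (fun z => (aeval (M z) p)⁻¹ * M z) := by
  obtain ⟨p, q, k, hp0, hq, hqA, hnilA⟩ := exists_jordanChevalley_polynomials_of_isUnit (hunit 1)
  have hid {r : ℂ[X]} (hr : aeval (M 1) r = 0) (z : ℂ) : aeval (M z) r = 0 :=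
    aeval_eq_zero_of_forall_mem_dense_conj hdiff.continuous (dense_compl_singleton 0)
      (fun z hz => hconj z 1 hz one_ne_zero) hr z
  have hS (z : ℂ) : aeval (aeval (M z) p) q = 0 := by
    rw [← aeval_comp]
    exact hid hqA z
  have hN (z : ℂ) : IsNilpotent (M z - aeval (M z) p) := by
    have hz := hid hnilA z
    rw [map_pow, map_sub, aeval_X] at hz
    exact ⟨k, hz⟩
  have hcomm (z : ℂ) : Commute (aeval (M z) p) (M z) := by
    simpa using ((commute_X p).map (aeval (M z))).symm
  have hunitS (z : ℂ) : IsUnit (aeval (M z) p) :=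
    isUnit_of_isNilpotent_sub (hunit z) (hcomm z) (hN z)
  have hdiffS : Differentiable ℂ fun z => aeval (M z) p := hdiff.aeval p
  refine ⟨p, hp0, fun z => ⟨exists_eq_mul_diagonal_mul_inv_of_squarefree hq (hS z), hunitS z,
    hcomm z, isNilpotent_inv_mul_sub_one (hunitS z) (hcomm z) (hN z)⟩, hdiffS, ?_⟩
  simp only [nonsing_inv_eq_ringInverse]
  exact (hdiffS.inverse hunitS).mul hdiff
end
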